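/- arXiv:2301.10810 — 2 statements merged into one kernel-verified Lean document; each statement's English description precedes it below -/
import Mathlib

section
/- Let p(a) = 0.4, p(b) = 0.3, p(c) = 0.3. Then a is the unique most probable tree (p(a) > p(b) and p(a) > p(c)), yet the marginal-log scores satisfy s(a) < s(b). Hence the scores obtained by minimizing the token-separable (head-selection) loss do not rank the most probable tree highest (Theorem 1: the separable loss is not Bayes consistent for distributions over dependency trees). -/
/-- With `p a = 0.4`, `p b = 0.3`, `p c = 0.3`, the tree `a` is the
unique most probable tree, yet the marginal-log scores satisfy `s a < s b`. -/
theorem stmt_0 :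
    let a : Finset (ℕ × ℕ) := {(0, 1), (1, 2)}
    let b : Finset (ℕ × ℕ) := {(0, 1), (0, 2)}
    let c : Finset (ℕ × ℕ) := {(0, 2), (2, 1)}
    let p : Finset (ℕ × ℕ) → ℝ := fun t =>
      if t = a then 0.4 else if t = b then 0.3 else if t = c then 0.3 else 0
    let mu : ℕ × ℕ → ℝ := fun e =>
      ∑ t ∈ ({a, b, c} : Finset (Finset (ℕ × ℕ))).filter (fun t => e ∈ t), p t
    let s : Finset (ℕ × ℕ) → ℝ := fun t => ∑ e ∈ t, Real.log (mu e)
    (p a > p b ∧ p a > p c) ∧ s a < s b := by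
  intro a b c p mu s
  have hab : a ≠ b := by decide
  have hac : a ≠ c := by decide
  have hbc : b ≠ c := by decide
  constructor
  · constructor <;> simp [p, hab, hab.symm, hac, hac.symm, hbc, hbc.symm] <;> norm_num
  · have hsa : s a = Real.log 0.7 + Real.log 0.4 := by
      show (∑ e ∈ a, Real.log (mu e)) = _
      rw [show a = {((0:ℕ),(1:ℕ)), (1,2)} from rfl]
      rw [Finset.sum_insert (by decide), Finset.sum_singleton]
      have h1 : mu (0,1) = 0.7 := by
        show (∑ t ∈ ({a, b, c} : Finset (Finset (ℕ × ℕ))).filter _, p t) = _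
        rw [show ({a, b, c} : Finset (Finset (ℕ × ℕ))).filter (fun t => ((0:ℕ),(1:ℕ)) ∈ t) = {a, b} from by decide]
        rw [Finset.sum_insert (by simpa using hab), Finset.sum_singleton]
        simp [p, hab, hab.symm, hbc, hbc.symm]; norm_num
      have h2 : mu (1,2) = 0.4 := by
        show (∑ t ∈ ({a, b, c} : Finset (Finset (ℕ × ℕ))).filter _, p t) = _
        rw [show ({a, b, c} : Finset (Finset (ℕ × ℕ))).filter (fun t => ((1:ℕ),(2:ℕ)) ∈ t) = {a} from by decide]
        rw [Finset.sum_singleton]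
        simp [p]
      rw [h1, h2]
    have hsb : s b = Real.log 0.7 + Real.log 0.6 := by
      show (∑ e ∈ b, Real.log (mu e)) = _
      rw [show b = {((0:ℕ),(1:ℕ)), (0,2)} from rfl]
      rw [Finset.sum_insert (by decide), Finset.sum_singleton]
      have h1 : mu (0,1) = 0.7 := by
        show (∑ t ∈ ({a, b, c} : Finset (Finset (ℕ × ℕ))).filter _, p t) = _
        rw [show ({a, b, c} : Finset (Finset (ℕ × ℕ))).filter (fun t => ((0:ℕ),(1:ℕ)) ∈ t) = {a, b} from by decide]
        rw [Finset.sum_insert (by simpa using hab), Finset.sum_singleton]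
        simp [p, hab, hab.symm, hbc, hbc.symm]; norm_num
      have h2 : mu (0,2) = 0.6 := by
        show (∑ t ∈ ({a, b, c} : Finset (Finset (ℕ × ℕ))).filter _, p t) = _
        rw [show ({a, b, c} : Finset (Finset (ℕ × ℕ))).filter (fun t => ((0:ℕ),(2:ℕ)) ∈ t) = {b, c} from by decide]
        rw [Finset.sum_insert (by simpa using hbc), Finset.sum_singleton]
        simp [p, hab.symm, hbc, hbc.symm, hac.symm]; norm_num
      rw [h1, h2]
    rw [hsa, hsb]
    have := Real.log_lt_log (by norm_num : (0.4:ℝ) > 0) (by norm_num : (0.4:ℝ) < 0.6)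
    linarith
end

section
/- Let p1, p2, p3 be real numbers with p1 > 0, p2 > 0, p3 > 0, p1 + p2 + p3 = 1, p2 > p1, p2 > p3, and p2 < 1/2. Set p(a) = p2, p(b) = p1, p(c) = p3. Then a is the unique most probable tree, yet the marginal-log scores satisfy s(a) < s(b). (Parametric family of counterexamples underlying Theorem 1: s(a) = log(p1+p2) + log p2 and s(b) = log(p1+p2) + log(p1+p3), and p2 < 1/2 implies p2 < p1 + p3.) -/
theorem stmt_1_general (p1 p2 p3 : ℝ) (h2 : 0 < p2)
    (hsum : p1 + p2 + p3 = 1) (h21 : p2 > p1) (h23 : p2 > p3) (hhalf : p2 < 1 / 2) :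
    let a : Finset (ℕ × ℕ) := {(0, 1), (1, 2)}
    let b : Finset (ℕ × ℕ) := {(0, 1), (0, 2)}
    let c : Finset (ℕ × ℕ) := {(0, 2), (2, 1)}
    let p : Finset (ℕ × ℕ) → ℝ := fun t =>
      if t = a then p2 else if t = b then p1 else if t = c then p3 else 0
    let mu : ℕ × ℕ → ℝ := fun e =>
      ∑ t ∈ ({a, b, c} : Finset (Finset (ℕ × ℕ))).filter (fun t => e ∈ t), p t
    let s : Finset (ℕ × ℕ) → ℝ := fun t => ∑ e ∈ t, Real.log (mu e)
    (p a > p b ∧ p a > p c) ∧ s a < s b := by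
  intro a b c p mu s
  have hab : a ≠ b := by decide
  have hac : a ≠ c := by decide
  have hbc : b ≠ c := by decide
  have hpa : p a = p2 := if_pos rfl
  have hpb : p b = p1 := by simp only [p, if_neg hab.symm, if_pos]
  have hpc : p c = p3 := by simp only [p, if_neg hac.symm, if_neg hbc.symm, if_pos]
  have mu_01 : mu (0, 1) = p2 + p1 := by
    have : ({a, b, c} : Finset (Finset (ℕ × ℕ))).filter (fun t => (0, 1) ∈ t) = {a, b} := by decide
    simp only [mu, this, Finset.sum_pair hab, hpa, hpb]
  have mu_12 : mu (1, 2) = p2 := by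
    have : ({a, b, c} : Finset (Finset (ℕ × ℕ))).filter (fun t => (1, 2) ∈ t) = {a} := by decide
    simp only [mu, this, Finset.sum_singleton, hpa]
  have mu_02 : mu (0, 2) = p1 + p3 := by
    have : ({a, b, c} : Finset (Finset (ℕ × ℕ))).filter (fun t => (0, 2) ∈ t) = {b, c} := by decide
    simp only [mu, this, Finset.sum_pair hbc, hpb, hpc]
  have hsa : s a = Real.log (mu (0, 1)) + Real.log (mu (1, 2)) := Finset.sum_pair (by decide)
  have hsb : s b = Real.log (mu (0, 1)) + Real.log (mu (0, 2)) := Finset.sum_pair (by decide)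
  refine ⟨⟨?_, ?_⟩, ?_⟩
  · rwa [hpa, hpb]
  · rwa [hpa, hpc]
  -- `a` and `b` share the arc (0,1) and differ in `mu (1,2) = p2` versus `mu (0,2) = 1 - p2 > p2`.
  · rw [hsa, hsb, mu_12, mu_02]
    gcongr
    linarith

/-- Parametric family of counterexamples underlying Theorem 1.
With `p a = p2`, `p b = p1`, `p c = p3`, where `p1, p2, p3 > 0` sum to one,
`p2 > p1`, `p2 > p3` and `p2 < 1/2`, the tree `a` is the unique most probable
tree yet the marginal-log scores satisfy `s a < s b`. -/
theorem stmt_1 (p1 p2 p3 : ℝ) (h1 : 0 < p1) (h2 : 0 < p2) (h3 : 0 < p3)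
    (hsum : p1 + p2 + p3 = 1) (h21 : p2 > p1) (h23 : p2 > p3) (hhalf : p2 < 1 / 2) :
    let a : Finset (ℕ × ℕ) := {(0, 1), (1, 2)}
    let b : Finset (ℕ × ℕ) := {(0, 1), (0, 2)}
    let c : Finset (ℕ × ℕ) := {(0, 2), (2, 1)}
    let p : Finset (ℕ × ℕ) → ℝ := fun t =>
      if t = a then p2 else if t = b then p1 else if t = c then p3 else 0
    let mu : ℕ × ℕ → ℝ := fun e =>
      ∑ t ∈ ({a, b, c} : Finset (Finset (ℕ × ℕ))).filter (fun t => e ∈ t), p t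
    let s : Finset (ℕ × ℕ) → ℝ := fun t => ∑ e ∈ t, Real.log (mu e)
    (p a > p b ∧ p a > p c) ∧ s a < s b :=
  stmt_1_general p1 p2 p3 h2 hsum h21 h23 hhalf
end
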